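/- arXiv:0704.1701 — 2 statements merged into one kernel-verified Lean document; each statement's English description precedes it below -/
import Mathlib

section
/- Let K be a field whose prime field is F, with char F ≠ 2, and let m ≥ 3 be an integer. Let ζ be a primitive 2^m-th root of unity in an algebraic closure of K, assume [K(ζ) : K] = 2, and let λ be the non-trivial K-automorphism of K(ζ). If λ(ζ) = ζ^{-1} or λ(ζ) = -ζ^{-1}, then K(ζ) = K(ζ_4), where ζ_4 = ζ^{2^{m-2}} is a primitive 4-th root of unity, and moreover K ∩ F(ζ_4) = F (the intersection taken inside K(ζ)). -/
/-!
Write `i = ζ ^ 2 ^ (m - 2)`, so that `i ^ 2 = -1`. Since `2 ^ (m - 2)` is even, both possible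
actions of `λ` on `ζ` give `λ i = i⁻¹ = -i`, and `-i ≠ i` because the characteristic is not
`2`; hence `i ∉ K`. So `K(i)` is a nontrivial subextension of the quadratic extension `K(ζ)`,
and the two agree. Every element of `F(i)` has the form `a + b i` with `a, b ∈ F`, and if such
an element lies in `K` with `b ≠ 0`, then `i ∈ K`; so `K ∩ F(i) = F`.
-/

open IntermediateField Module

lemma IsPrimitiveRoot.pow_two_pow_sub_two_sq {R : Type*} [CommRing R] [NoZeroDivisors R]
    {ζ : R} {m : ℕ} (hζ : IsPrimitiveRoot ζ (2 ^ m)) (hm : 2 ≤ m) :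
    (ζ ^ 2 ^ (m - 2)) ^ 2 = -1 := by
  have h4 : IsPrimitiveRoot (ζ ^ 2 ^ (m - 2)) 4 :=
    hζ.pow (by positivity) (by rw [show 4 = 2 ^ 2 by rfl, ← pow_add, Nat.sub_add_cancel hm])
  exact (h4.pow (by norm_num) (by norm_num) : IsPrimitiveRoot _ 2).eq_neg_one_of_two_right

lemma Even.pow_eq_inv_pow_of_eq_inv_or_eq_neg_inv {G : Type*} [DivisionMonoid G]
    [HasDistribNeg G] {y z : G} {n : ℕ} (hn : Even n) (h : y = z⁻¹ ∨ y = -z⁻¹) :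
    y ^ n = (z ^ n)⁻¹ := by
  rcases h with rfl | rfl
  · exact inv_pow z n
  · rw [hn.neg_pow, inv_pow]

namespace IntermediateField

variable {K E : Type*} [Field K] [Field E] [Algebra K E]

lemma coe_notMem_bot_of_algEquiv_apply_eq_neg {L : IntermediateField K E} (σ : L ≃ₐ[K] L)
    (h2 : (2 : K) ≠ 0) {x : L} (hx : x ≠ 0) (hσ : σ x = -x) :
    (x : E) ∉ (⊥ : IntermediateField K E) := by
  rintro ⟨c, hc⟩
  have hcx : algebraMap K L c = x := Subtype.ext hc
  have hfix : σ x = x := hcx ▸ σ.commutes c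
  have h2c : algebraMap K L (2 * c) = 0 := by
    rw [map_mul, map_ofNat, hcx]
    linear_combination hfix.symm.trans hσ
  rw [map_eq_zero_iff _ (algebraMap K L).injective, mul_eq_zero] at h2c
  exact hx (by rw [← hcx, h2c.resolve_left h2, map_zero])

lemma eq_of_le_of_finrank_eq_two {S T : IntermediateField K E} (hle : S ≤ T)
    (hT : finrank K T = 2) (hS : S ≠ ⊥) : S = T := by
  have : FiniteDimensional K T := .of_finrank_eq_succ hT
  have : FiniteDimensional K S :=
    .of_injective (inclusion hle).toLinearMap (inclusion_injective hle)
  have hS1 : finrank K S ≠ 1 := mt finrank_eq_one_iff.mp hS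
  have hS0 : 0 < finrank K S := finrank_pos
  have hST : finrank K S ≤ finrank K T := finrank_le_of_le_right hle
  exact eq_of_le_of_finrank_le hle (by omega)

end IntermediateField

namespace Subfield

variable {E : Type*} [Field E] {i : E}

lemma exists_inv_eq_add_mul_of_sq_eq_neg_one (k : Subfield E) (hi : i ^ 2 = -1) {a b : E}
    (ha : a ∈ k) (hb : b ∈ k) : ∃ c ∈ k, ∃ d ∈ k, (a + b * i)⁻¹ = c + d * i := by
  by_cases hconj : a - b * i = 0
  · refine ⟨(a + a)⁻¹, inv_mem (add_mem ha ha), 0, zero_mem k, ?_⟩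
    rw [show b * i = a by linear_combination -hconj]
    ring
  · have hnorm : (a + b * i) * (a - b * i) = a ^ 2 + b ^ 2 := by
      linear_combination (-b ^ 2) * hi
    have hn : a ^ 2 + b ^ 2 ∈ k := add_mem (pow_mem ha 2) (pow_mem hb 2)
    refine ⟨a * (a ^ 2 + b ^ 2)⁻¹, mul_mem ha (inv_mem hn),
      -b * (a ^ 2 + b ^ 2)⁻¹, mul_mem (neg_mem hb) (inv_mem hn), ?_⟩
    calc (a + b * i)⁻¹ = (a - b * i) * ((a + b * i) * (a - b * i))⁻¹ := by
          rw [mul_inv_rev, mul_inv_cancel_left₀ hconj]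
      _ = _ := by rw [hnorm]; ring

lemma exists_eq_add_mul_of_mem_closure_singleton (hi : i ^ 2 = -1) {x : E}
    (hx : x ∈ closure {i}) :
    ∃ a ∈ (⊥ : Subfield E), ∃ b ∈ (⊥ : Subfield E), x = a + b * i := by
  induction hx using closure_induction with
  | mem y hy => exact ⟨0, zero_mem _, 1, one_mem _, by rw [Set.mem_singleton_iff.mp hy]; ring⟩
  | one => exact ⟨1, one_mem _, 0, zero_mem _, by ring⟩
  | add _ _ _ _ h₁ h₂ =>
    obtain ⟨a, ha, b, hb, rfl⟩ := h₁
    obtain ⟨c, hc, d, hd, rfl⟩ := h₂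
    exact ⟨a + c, add_mem ha hc, b + d, add_mem hb hd, by ring⟩
  | neg _ _ h =>
    obtain ⟨a, ha, b, hb, rfl⟩ := h
    exact ⟨-a, neg_mem ha, -b, neg_mem hb, by ring⟩
  | mul _ _ _ _ h₁ h₂ =>
    obtain ⟨a, ha, b, hb, rfl⟩ := h₁
    obtain ⟨c, hc, d, hd, rfl⟩ := h₂
    exact ⟨a * c - b * d, sub_mem (mul_mem ha hc) (mul_mem hb hd),
      a * d + b * c, add_mem (mul_mem ha hd) (mul_mem hb hc), by linear_combination b * d * hi⟩
  | inv _ _ h =>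
    obtain ⟨a, ha, b, hb, rfl⟩ := h
    exact exists_inv_eq_add_mul_of_sq_eq_neg_one ⊥ hi ha hb

lemma inf_closure_singleton_eq_bot_of_sq_eq_neg_one (k : Subfield E) (hi : i ^ 2 = -1)
    (hik : i ∉ k) : k ⊓ closure {i} = ⊥ := by
  refine eq_bot_iff.mpr fun x ⟨hxk, hxi⟩ => ?_
  obtain ⟨a, ha, b, hb, rfl⟩ := exists_eq_add_mul_of_mem_closure_singleton hi hxi
  have hbot : (⊥ : Subfield E) ≤ k := bot_le
  obtain rfl : b = 0 := by
    by_contra hb0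
    refine hik ?_
    rw [show i = (a + b * i - a) * b⁻¹ by field_simp; ring]
    exact mul_mem (sub_mem hxk (hbot ha)) (inv_mem (hbot hb))
  simpa using ha

end Subfield

theorem adjoin_eq_adjoin_fourth_root_and_inf_bot_general
    (K : Type) [Field K] (hchar : ringChar K ≠ 2)
    (m : ℕ) (hm : 3 ≤ m)
    (ζ : AlgebraicClosure K) (hζ : IsPrimitiveRoot ζ (2 ^ m))
    (hdeg : Module.finrank K
      (IntermediateField.adjoin K ({ζ} : Set (AlgebraicClosure K))) = 2)
    (lam : IntermediateField.adjoin K ({ζ} : Set (AlgebraicClosure K)) ≃ₐ[K]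
      IntermediateField.adjoin K ({ζ} : Set (AlgebraicClosure K)))
    (hact : lam ⟨ζ, IntermediateField.mem_adjoin_simple_self K ζ⟩ =
        (⟨ζ, IntermediateField.mem_adjoin_simple_self K ζ⟩ :
          IntermediateField.adjoin K ({ζ} : Set (AlgebraicClosure K)))⁻¹ ∨
      lam ⟨ζ, IntermediateField.mem_adjoin_simple_self K ζ⟩ =
        -(⟨ζ, IntermediateField.mem_adjoin_simple_self K ζ⟩ :
          IntermediateField.adjoin K ({ζ} : Set (AlgebraicClosure K)))⁻¹) :
    IntermediateField.adjoin K ({ζ} : Set (AlgebraicClosure K)) =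
      IntermediateField.adjoin K ({ζ ^ 2 ^ (m - 2)} : Set (AlgebraicClosure K)) ∧
    (algebraMap K (AlgebraicClosure K)).fieldRange ⊓
      Subfield.closure {ζ ^ 2 ^ (m - 2)} = ⊥ := by
  set z : K⟮ζ⟯ := ⟨ζ, mem_adjoin_simple_self K ζ⟩
  have hz : IsPrimitiveRoot z (2 ^ m) := IsPrimitiveRoot.coe_submonoidClass_iff.mp hζ
  have hw : (z ^ 2 ^ (m - 2)) ^ 2 = -1 := hz.pow_two_pow_sub_two_sq (by omega)
  have hlam_w : lam (z ^ 2 ^ (m - 2)) = -z ^ 2 ^ (m - 2) := by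
    rw [map_pow, (Nat.even_pow.mpr ⟨even_two, by omega⟩).pow_eq_inv_pow_of_eq_inv_or_eq_neg_inv
      hact]
    exact inv_eq_of_mul_eq_one_right (by linear_combination -hw)
  have hiK : ζ ^ 2 ^ (m - 2) ∉ (⊥ : IntermediateField K (AlgebraicClosure K)) :=
    coe_notMem_bot_of_algEquiv_apply_eq_neg lam (Ring.two_ne_zero hchar)
      (pow_ne_zero _ (hz.ne_zero (by positivity))) hlam_w
  refine ⟨(eq_of_le_of_finrank_eq_two ?_ hdeg (mt adjoin_simple_eq_bot_iff.mp hiK)).symm, ?_⟩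
  · exact adjoin_simple_le_iff.mpr (pow_mem (mem_adjoin_simple_self K ζ) _)
  · rw [← bot_toSubfield]
    exact Subfield.inf_closure_singleton_eq_bot_of_sq_eq_neg_one _
      (hζ.pow_two_pow_sub_two_sq (by omega)) hiK

/-- **Lemma 2.4.** Let `K` be a field with prime field `F` of characteristic `≠ 2`, and
`m ≥ 3`.  Let `ζ` be a primitive `2^m`-th root of unity in an algebraic closure of `K` with
`[K(ζ) : K] = 2`, and let `λ` be the non-trivial `K`-automorphism of `K(ζ)`.  If
`λ(ζ) = ζ⁻¹` or `λ(ζ) = -ζ⁻¹`, then `K(ζ) = K(ζ₄)` where `ζ₄ = ζ^(2^(m-2))` is a primitive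
4-th root of unity, and `K ∩ F(ζ₄) = F` (inside the algebraic closure, with `F` the prime
subfield). -/
theorem adjoin_eq_adjoin_fourth_root_and_inf_bot
    (K : Type) [Field K] (hchar : ringChar K ≠ 2)
    (m : ℕ) (hm : 3 ≤ m)
    (ζ : AlgebraicClosure K) (hζ : IsPrimitiveRoot ζ (2 ^ m))
    (hdeg : Module.finrank K
      (IntermediateField.adjoin K ({ζ} : Set (AlgebraicClosure K))) = 2)
    (lam : IntermediateField.adjoin K ({ζ} : Set (AlgebraicClosure K)) ≃ₐ[K]
      IntermediateField.adjoin K ({ζ} : Set (AlgebraicClosure K)))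
    (hlam : lam ≠ AlgEquiv.refl)
    (hact : lam ⟨ζ, IntermediateField.mem_adjoin_simple_self K ζ⟩ =
        (⟨ζ, IntermediateField.mem_adjoin_simple_self K ζ⟩ :
          IntermediateField.adjoin K ({ζ} : Set (AlgebraicClosure K)))⁻¹ ∨
      lam ⟨ζ, IntermediateField.mem_adjoin_simple_self K ζ⟩ =
        -(⟨ζ, IntermediateField.mem_adjoin_simple_self K ζ⟩ :
          IntermediateField.adjoin K ({ζ} : Set (AlgebraicClosure K)))⁻¹) :
    IntermediateField.adjoin K ({ζ} : Set (AlgebraicClosure K)) =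
      IntermediateField.adjoin K ({ζ ^ 2 ^ (m - 2)} : Set (AlgebraicClosure K)) ∧
    (algebraMap K (AlgebraicClosure K)).fieldRange ⊓
      Subfield.closure {ζ ^ 2 ^ (m - 2)} = ⊥ :=
  adjoin_eq_adjoin_fourth_root_and_inf_bot_general K hchar m hm ζ hζ hdeg lam hact
end

section
/- Let p be an odd prime, n ≥ 3, and K a field with char K ≠ p. Let ζ be a primitive p^{n-1}-th root of unity in an algebraic closure of K. If [K(ζ) : K] = p, then ζ^p ∈ K; in particular, K contains a primitive p^{n-2}-th root of unity. -/
/-!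
The Galois group of `K(ζ)/K` embeds into `(ℤ/p^(n-1))ˣ` via `σ ζ = ζ^a`, and here it has order
`p`, so every `a` satisfies `a^p ≡ 1 mod p^(n-1)`. For odd `p` lifting the exponent turns this into
`a ≡ 1 mod p^(n-2)`, i.e. `a p ≡ p mod p^(n-1)`, so every automorphism fixes `ζ^p`, which therefore
lies in `K`.
-/

theorem Int.pow_dvd_sub_one_mul_of_pow_dvd_pow_sub_one {p m : ℕ} (hp : p.Prime) (hodd : Odd p)
    {a : ℤ} (h : (p : ℤ) ^ m ∣ a ^ p - 1) : (p : ℤ) ^ m ∣ (a - 1) * p := by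
  rcases m.eq_zero_or_pos with rfl | hm
  · simp
  have hfermat : (p : ℤ) ∣ a ^ p - a := by
    have : Fact p.Prime := ⟨hp⟩
    simp [← ZMod.intCast_zmod_eq_zero_iff_dvd]
  have h1 : (p : ℤ) ∣ a - 1 := by
    simpa using dvd_sub ((dvd_pow_self _ hm.ne').trans h) hfermat
  have hpa : ¬ (p : ℤ) ∣ a := fun hpa ↦
    (Int.natCast_dvd_natCast.not.mpr hp.not_dvd_one) (by simpa using dvd_sub hpa h1)
  have hlte := Int.emultiplicity_pow_sub_pow hp hodd (by simpa using h1) hpa p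
  rw [one_pow] at hlte
  rw [pow_dvd_iff_le_emultiplicity] at h ⊢
  rwa [emultiplicity_mul (Nat.prime_iff_prime_int.mp hp), Int.natCast_emultiplicity, ← hlte]

theorem IsPrimitiveRoot.algEquiv_apply_pow_prime_of_pow_eq_one {R S : Type*} [CommRing R]
    [CommRing S] [IsDomain S] [Algebra R S] {p m : ℕ} (hp : p.Prime) (hodd : Odd p) {η : S}
    (hη : IsPrimitiveRoot η (p ^ m)) {σ : S ≃ₐ[R] S} (hσ : σ ^ p = 1) : σ (η ^ p) = η ^ p := by
  have : NeZero (p ^ m) := ⟨pow_ne_zero _ hp.ne_zero⟩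
  rw [map_pow, ← hη.autToPow_spec R σ, ← pow_mul]
  set a := (hη.autToPow R σ : ZMod (p ^ m)).val
  have ha : (a : ZMod (p ^ m)) ^ p = 1 := by
    rw [ZMod.natCast_zmod_val, ← Units.val_pow_eq_pow_val, ← map_pow, hσ, map_one, Units.val_one]
  have hdvd : (p : ℤ) ^ m ∣ ((a : ℤ) - 1) * p := by
    refine Int.pow_dvd_sub_one_mul_of_pow_dvd_pow_sub_one hp hodd ?_
    rw [← Nat.cast_pow, ← ZMod.intCast_zmod_eq_zero_iff_dvd]
    simp [ha]
  refine pow_eq_pow_of_modEq ?_ hη.pow_eq_one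
  rw [Nat.modEq_iff_dvd, Nat.cast_pow, Nat.cast_mul, show (p : ℤ) - a * p = -((a - 1) * p) by ring]
  exact hdvd.neg_right

open IntermediateField in
theorem IsPrimitiveRoot.pow_prime_mem_range_algebraMap_of_finrank_adjoin_eq {K E : Type*}
    [Field K] [Field E] [Algebra K E] {p m : ℕ} (hp : p.Prime) (hodd : Odd p) {ζ : E}
    (hζ : IsPrimitiveRoot ζ (p ^ m)) (hdeg : Module.finrank K K⟮ζ⟯ = p) :
    ζ ^ p ∈ Set.range (algebraMap K E) := by
  have : NeZero (p ^ m) := ⟨pow_ne_zero _ hp.ne_zero⟩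
  have : IsCyclotomicExtension {p ^ m} K K⟮ζ⟯ := by
    have hζint : IsIntegral K ζ := (hζ.isIntegral (NeZero.pos _)).tower_top
    change IsCyclotomicExtension _ K K⟮ζ⟯.toSubalgebra
    rw [adjoin_simple_toSubalgebra_of_isAlgebraic hζint.isAlgebraic]
    exact hζ.adjoin_isCyclotomicExtension K
  have : FiniteDimensional K K⟮ζ⟯ := IsCyclotomicExtension.finiteDimensional {p ^ m} K _
  have : IsGalois K K⟮ζ⟯ := IsCyclotomicExtension.isGalois {p ^ m} K _
  have hη : IsPrimitiveRoot (AdjoinSimple.gen K ζ) (p ^ m) :=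
    IsPrimitiveRoot.coe_submonoidClass_iff.mp hζ
  obtain ⟨c, hc⟩ := (IsGalois.mem_range_algebraMap_iff_fixed _).mpr fun σ ↦
    hη.algEquiv_apply_pow_prime_of_pow_eq_one hp hodd <| by
      rw [← hdeg, ← IsGalois.card_aut_eq_finrank]
      exact pow_card_eq_one'
  exact ⟨c, by simpa using congrArg ((↑) : K⟮ζ⟯ → E) hc⟩

theorem pow_p_mem_of_finrank_eq_p_general
    (p n : ℕ) (hp : p.Prime) (hodd : Odd p) (hn : 3 ≤ n)
    (K : Type) [Field K]
    (ζ : AlgebraicClosure K) (hζ : IsPrimitiveRoot ζ (p ^ (n - 1)))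
    (hdeg : Module.finrank K
      (IntermediateField.adjoin K ({ζ} : Set (AlgebraicClosure K))) = p) :
    (∃ c : K, algebraMap K (AlgebraicClosure K) c = ζ ^ p) ∧
    ∃ ξ : K, IsPrimitiveRoot ξ (p ^ (n - 2)) := by
  obtain ⟨c, hc⟩ := hζ.pow_prime_mem_range_algebraMap_of_finrank_adjoin_eq hp hodd hdeg
  refine ⟨⟨c, hc⟩, c, .of_map_of_injective ?_ (algebraMap K (AlgebraicClosure K)).injective⟩
  rw [hc, show n - 2 = n - 1 - 1 by omega, ← Nat.pow_div (by omega) hp.pos, pow_one]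
  exact hζ.pow_of_dvd hp.ne_zero (dvd_pow_self p (by omega))

/-- If `p` is an odd prime, `n ≥ 3`, `char K ≠ p`, `ζ` is a primitive `p^(n-1)`-th root of
unity in an algebraic closure of `K` and `[K(ζ) : K] = p`, then `ζ^p ∈ K`; in particular `K`
contains a primitive `p^(n-2)`-th root of unity. -/
theorem pow_p_mem_of_finrank_eq_p
    (p n : ℕ) (hp : p.Prime) (hodd : Odd p) (hn : 3 ≤ n)
    (K : Type) [Field K] (hchar : ringChar K ≠ p)
    (ζ : AlgebraicClosure K) (hζ : IsPrimitiveRoot ζ (p ^ (n - 1)))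
    (hdeg : Module.finrank K
      (IntermediateField.adjoin K ({ζ} : Set (AlgebraicClosure K))) = p) :
    (∃ c : K, algebraMap K (AlgebraicClosure K) c = ζ ^ p) ∧
    ∃ ξ : K, IsPrimitiveRoot ξ (p ^ (n - 2)) :=
  pow_p_mem_of_finrank_eq_p_general p n hp hodd hn K ζ hζ hdeg
end
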